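/- Let G be a group whose abelianization G/[G,G] has exponent dividing p and suppose G is nilpotent of class c. Then the p-central series of G, defined by P₀(G) = G and P_{n+1}(G) = [G, P_n(G)]·P_n(G)ᵖ, coincides with the lower central series: P_n(G) = γ_{n+1}(G) for all n, and in particular G has p-class c. -/

import Mathlib

/-! Clearly `γ_{n+2} = [G, γ_{n+1}] ≤ P_{n+1}`; for the converse it suffices, by induction on `n`,
that `p`-th powers of elements of `γ_{n+1}` lie in `γ_{n+2}`. For `n = 0` this is the hypothesis on
the abelianization. For `n ≥ 1`, `γ_{n+1}` is central modulo `γ_{n+2}`, so the `p`-th power map is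
a homomorphism on it there, and for a generator `⁅a, b⁆` with `a ∈ γ_n` we get
`⁅a, b⁆ᵖ ≡ ⁅aᵖ, b⁆ mod γ_{n+2}`; by induction `aᵖ ∈ γ_{n+1}`, so `⁅aᵖ, b⁆ ∈ γ_{n+2}`.

Mathlib's `(⊤ : Subgroup G).lowerCentralSeries n` is `γ_{n+1}`. -/

/-- The `p`-central series: `P 0 = G`, `P (n+1) = [G, P n]·(P n)ᵖ`. -/
def pCentralSeries (p : ℕ) (G : Type*) [Group G] : ℕ → Subgroup G
  | 0 => ⊤
  | n + 1 =>
      ⁅(⊤ : Subgroup G), pCentralSeries p G n⁆ ⊔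
        Subgroup.closure {x : G | ∃ g ∈ pCentralSeries p G n, x = g ^ p}

open Subgroup
open scoped commutatorElement

section

variable {G : Type*} [Group G]

theorem commutatorElement_pow_left_of_commute {a b : G} (h : Commute ⁅a, b⁆ a) (k : ℕ) :
    ⁅a ^ k, b⁆ = ⁅a, b⁆ ^ k := by
  induction k with
  | zero => simp
  | succ k ih =>
    rw [pow_succ', commutatorElement_mul_left_eq_conj_mul, ih, ← (h.pow_left k).eq,
      mul_inv_cancel_right, pow_succ]

@[simp]
theorem QuotientGroup.mk_commutatorElement (N : Subgroup G) [N.Normal] (x y : G) :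
    ((⁅x, y⁆ : G) : G ⧸ N) = ⁅(x : G ⧸ N), (y : G ⧸ N)⁆ :=
  map_commutatorElement (QuotientGroup.mk' N) x y

theorem QuotientGroup.commute_mk_of_commutator_le {K N : Subgroup G} [N.Normal]
    (hK : ⁅K, ⊤⁆ ≤ N) {x : G} (hx : x ∈ K) (y : G) :
    Commute (x : G ⧸ N) (y : G ⧸ N) := by
  rw [← commutatorElement_eq_one_iff_commute, ← QuotientGroup.mk_commutatorElement,
    QuotientGroup.eq_one_iff]
  exact hK (commutator_mem_commutator hx (mem_top y))

theorem pow_mem_of_closure_of_commutator_le {S : Set G} {N : Subgroup G} [N.Normal]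
    (hN : ⁅closure S, ⊤⁆ ≤ N) (p : ℕ) (hS : ∀ s ∈ S, s ^ p ∈ N) {g : G} (hg : g ∈ closure S) :
    g ^ p ∈ N := by
  rw [← QuotientGroup.eq_one_iff, QuotientGroup.mk_pow]
  induction hg using closure_induction with
  | mem s hs => rw [← QuotientGroup.mk_pow, QuotientGroup.eq_one_iff]; exact hS s hs
  | one => simp
  | mul x y hx _ hpx hpy =>
    rw [QuotientGroup.mk_mul, (QuotientGroup.commute_mk_of_commutator_le hN hx y).mul_pow, hpx,
      hpy, one_mul]
  | inv x _ hpx => rw [QuotientGroup.mk_inv, inv_pow, hpx, inv_one]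

theorem pow_mem_lowerCentralSeries_succ {p : ℕ} (h : ∀ g : G, g ^ p ∈ commutator G) (n : ℕ)
    {g : G} (hg : g ∈ (⊤ : Subgroup G).lowerCentralSeries n) :
    g ^ p ∈ (⊤ : Subgroup G).lowerCentralSeries (n + 1) := by
  induction n generalizing g with
  | zero => exact h g
  | succ n ih =>
    set N := (⊤ : Subgroup G).lowerCentralSeries (n + 2)
    refine pow_mem_of_closure_of_commutator_le (N := N) le_rfl p ?_ hg
    rintro _ ⟨a, ha, b, -, rfl⟩
    have hcomm : Commute ⁅(a : G ⧸ N), (b : G ⧸ N)⁆ a := by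
      rw [← QuotientGroup.mk_commutatorElement]
      exact QuotientGroup.commute_mk_of_commutator_le le_rfl
        (commutator_mem_commutator ha (mem_top b)) a
    have hpow : ⁅a ^ p, b⁆ ∈ N := commutator_mem_commutator (ih ha) (mem_top b)
    rw [← QuotientGroup.eq_one_iff] at hpow ⊢
    rw [QuotientGroup.mk_pow, QuotientGroup.mk_commutatorElement,
      ← commutatorElement_pow_left_of_commute hcomm, ← QuotientGroup.mk_pow,
      ← QuotientGroup.mk_commutatorElement, hpow]

theorem pCentralSeries_eq_lowerCentralSeries {p : ℕ} (h : ∀ g : G, g ^ p ∈ commutator G)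
    (n : ℕ) : pCentralSeries p G n = (⊤ : Subgroup G).lowerCentralSeries n := by
  induction n with
  | zero => rfl
  | succ n ih =>
    rw [pCentralSeries, ih, commutator_comm, ← Subgroup.lowerCentralSeries_succ, sup_eq_left,
      closure_le]
    rintro _ ⟨g, hg, rfl⟩
    exact pow_mem_lowerCentralSeries_succ h n hg

end

/-- If `G` has abelianization of exponent dividing `p` and is nilpotent of class
`c`, then the `p`-central series coincides with the lower central series
(`lowerCentralSeries G n` is `γ_{n+1}(G)`), and `G` has `p`-class `c`. -/
theorem stmt_5 (p : ℕ) (G : Type*) [Group G] [Group.IsNilpotent G]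
    (h : ∀ g : G, g ^ p ∈ commutator G) (c : ℕ)
    (hc : Group.nilpotencyClass G = c) :
    (∀ n : ℕ, pCentralSeries p G n = (⊤ : Subgroup G).lowerCentralSeries n) ∧
      pCentralSeries p G c = ⊥ ∧ ∀ m < c, pCentralSeries p G m ≠ ⊥ := by
  refine ⟨pCentralSeries_eq_lowerCentralSeries h, ?_, fun m hm ↦ ?_⟩
  · rw [pCentralSeries_eq_lowerCentralSeries h, ← hc]
    exact Subgroup.lowerCentralSeries_nilpotencyClass
  · rw [pCentralSeries_eq_lowerCentralSeries h, Ne,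
      Subgroup.lowerCentralSeries_eq_bot_iff_nilpotencyClass_le, hc]
    exact hm.not_ge
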